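/- Let f: ℝ^{n₀} → ℝ^{n₂} be a single-hidden-layer neural network f(x) = W¹ φ(W⁰ x + b⁰) + b¹, where φ applies coordinatewise an activation slope-restricted in [α, β] with 0 ≤ α < β. Suppose there exist L² > 0 and a diagonal matrix T with nonnegative entries such that the symmetric matrix [[−2αβ(W⁰)ᵀTW⁰ − L²I, (α+β)(W⁰)ᵀT]; [(α+β)TW⁰, −2T + (W¹)ᵀW¹]] is negative semidefinite. Then f is globally Lipschitz with constant L, i.e., ‖f(x) − f(y)‖ ≤ L‖x − y‖ for all x, y. -/

import Mathlib

open Matrix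

noncomputable def enorm {ι : Type*} [Fintype ι] (v : ι → ℝ) : ℝ :=
  Real.sqrt (∑ i, v i ^ 2)

/-!
Put `d = x - y` and `w = φ(W⁰x + b⁰) - φ(W⁰y + b⁰)`, so that `f x - f y = W¹ w`. Slope restriction
says that each `w i` lies in the sector between `α (W⁰d) i` and `β (W⁰d) i`, i.e.
`(w i - α (W⁰d) i) (β (W⁰d) i - w i) ≥ 0`. Evaluating the quadratic form of the LMI at `(d, w)` gives
`2 ∑ λᵢ (wᵢ - α (W⁰d)ᵢ) (β (W⁰d)ᵢ - wᵢ) - L² ‖d‖² + ‖W¹ w‖² ≤ 0`, and the first sum is nonnegative.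
-/

/-- `lam` is the diagonal of the paper's multiplier matrix `T`, and `ρ` plays the role of `L²`. -/
def lipSDPMatrix {m n k : Type*} [Fintype n] [Fintype k] [DecidableEq m] [DecidableEq n] (α β : ℝ)
    (W0 : Matrix n m ℝ) (W1 : Matrix k n ℝ) (lam : n → ℝ) (ρ : ℝ) :
    Matrix (m ⊕ n) (m ⊕ n) ℝ :=
  fromBlocks ((-2 * α * β) • (W0ᵀ * diagonal lam * W0) - ρ • (1 : Matrix m m ℝ))
    ((α + β) • (W0ᵀ * diagonal lam)) ((α + β) • (diagonal lam * W0))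
    ((-2 : ℝ) • diagonal lam + W1ᵀ * W1)

theorem sumElim_dotProduct_lipSDPMatrix_mulVec {m n k : Type*} [Fintype m] [Fintype n]
    [Fintype k] [DecidableEq m] [DecidableEq n] (α β : ℝ) (W0 : Matrix n m ℝ)
    (W1 : Matrix k n ℝ) (lam : n → ℝ) (ρ : ℝ) (d : m → ℝ) (w : n → ℝ) :
    Sum.elim d w ⬝ᵥ lipSDPMatrix α β W0 W1 lam ρ *ᵥ Sum.elim d w =
      2 * ∑ i, lam i * ((w i - α * (W0 *ᵥ d) i) * (β * (W0 *ᵥ d) i - w i))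
        - ρ * (d ⬝ᵥ d) + (W1 *ᵥ w) ⬝ᵥ (W1 *ᵥ w) := by
  set p := W0 *ᵥ d
  have hW0t (s : n → ℝ) : d ⬝ᵥ (W0ᵀ *ᵥ s) = p ⬝ᵥ s := by
    rw [dotProduct_mulVec, vecMul_transpose]
  have hW1 : w ⬝ᵥ (W1ᵀ *ᵥ (W1 *ᵥ w)) = (W1 *ᵥ w) ⬝ᵥ (W1 *ᵥ w) := by
    rw [dotProduct_mulVec, vecMul_transpose]
  have hdiag (s t : n → ℝ) : s ⬝ᵥ (diagonal lam *ᵥ t) = ∑ i, lam i * (s i * t i) := by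
    simp only [dotProduct, mulVec_diagonal]
    exact Finset.sum_congr rfl fun i _ => by ring
  rw [lipSDPMatrix, fromBlocks_mulVec, Sum.elim_comp_inl, Sum.elim_comp_inr,
    sumElim_dotProduct_sumElim]
  simp only [sub_mulVec, add_mulVec, smul_mulVec, one_mulVec, ← mulVec_mulVec,
    dotProduct_add, dotProduct_sub, dotProduct_smul, smul_eq_mul, hW0t, hW1, hdiag]
  have hexpand : 2 * ∑ i, lam i * ((w i - α * p i) * (β * p i - w i)) =
      -2 * α * β * ∑ i, lam i * (p i * p i) + (α + β) * ∑ i, lam i * (p i * w i)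
        + (α + β) * ∑ i, lam i * (w i * p i) - 2 * ∑ i, lam i * (w i * w i) := by
    simp only [Finset.mul_sum, ← Finset.sum_add_distrib, ← Finset.sum_sub_distrib]
    exact Finset.sum_congr rfl fun i _ => by ring
  rw [hexpand]
  ring

theorem sector_of_slope_bounds {φ : ℝ → ℝ} {α β : ℝ}
    (hslope : ∀ s t : ℝ, s ≠ t →
      α ≤ (φ s - φ t) / (s - t) ∧ (φ s - φ t) / (s - t) ≤ β) (s t : ℝ) :
    0 ≤ (φ s - φ t - α * (s - t)) * (β * (s - t) - (φ s - φ t)) := by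
  rcases eq_or_ne s t with rfl | hst
  · simp
  obtain ⟨hα, hβ⟩ := hslope s t hst
  set r := (φ s - φ t) / (s - t)
  have hφ : φ s - φ t = r * (s - t) := (div_mul_cancel₀ _ (sub_ne_zero.mpr hst)).symm
  calc 0 ≤ (r - α) * (β - r) * (s - t) ^ 2 := by
        have := mul_nonneg (sub_nonneg.mpr hα) (sub_nonneg.mpr hβ)
        positivity
    _ = _ := by rw [hφ]; ring

theorem enorm_eq_sqrt_dotProduct {ι : Type*} [Fintype ι] (v : ι → ℝ) :
    _root_.enorm v = √(v ⬝ᵥ v) := by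
  simp only [_root_.enorm, dotProduct, sq]

theorem enorm_le_mul_of_dotProduct_le {ι κ : Type*} [Fintype ι] [Fintype κ] {u : ι → ℝ}
    {v : κ → ℝ} {L : ℝ} (hL : 0 ≤ L) (h : u ⬝ᵥ u ≤ L ^ 2 * (v ⬝ᵥ v)) :
    _root_.enorm u ≤ L * _root_.enorm v := by
  rw [enorm_eq_sqrt_dotProduct, enorm_eq_sqrt_dotProduct, ← Real.sqrt_sq hL,
    ← Real.sqrt_mul (sq_nonneg L)]
  exact Real.sqrt_le_sqrt h

theorem lipsdp_single_layer_general (n0 n1 n2 : ℕ) (φ : ℝ → ℝ) (α β : ℝ)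
    (hslope : ∀ s t : ℝ, s ≠ t →
      α ≤ (φ s - φ t) / (s - t) ∧ (φ s - φ t) / (s - t) ≤ β)
    (W0 : Matrix (Fin n1) (Fin n0) ℝ) (W1 : Matrix (Fin n2) (Fin n1) ℝ)
    (b0 : Fin n1 → ℝ) (b1 : Fin n2 → ℝ)
    (L : ℝ) (hL : 0 < L) (lam : Fin n1 → ℝ) (hlam : ∀ i, 0 ≤ lam i)
    (hLMI : ∀ z : Fin n0 ⊕ Fin n1 → ℝ,
      z ⬝ᵥ (Matrix.fromBlocks
        ((-2 * α * β) • (W0ᵀ * Matrix.diagonal lam * W0)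
          - L ^ 2 • (1 : Matrix (Fin n0) (Fin n0) ℝ))
        ((α + β) • (W0ᵀ * Matrix.diagonal lam))
        ((α + β) • (Matrix.diagonal lam * W0))
        ((-2 : ℝ) • Matrix.diagonal lam + W1ᵀ * W1)).mulVec z ≤ 0) :
    ∀ x y : Fin n0 → ℝ,
      _root_.enorm ((W1.mulVec (fun j => φ ((W0.mulVec x + b0) j)) + b1)
           - (W1.mulVec (fun j => φ ((W0.mulVec y + b0) j)) + b1))
        ≤ L * _root_.enorm (x - y) := by
  intro x y
  set w : Fin n1 → ℝ := fun j => φ ((W0 *ᵥ x + b0) j) - φ ((W0 *ᵥ y + b0) j)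
  have hpre : W0 *ᵥ (x - y) = (W0 *ᵥ x + b0) - (W0 *ᵥ y + b0) := by
    rw [mulVec_sub, add_sub_add_right_eq_sub]
  have hsector :
      0 ≤ ∑ i, lam i * ((w i - α * (W0 *ᵥ (x - y)) i) * (β * (W0 *ᵥ (x - y)) i - w i)) :=
    Finset.sum_nonneg fun i _ =>
      mul_nonneg (hlam i) (by rw [hpre]; exact sector_of_slope_bounds hslope _ _)
  have hform : Sum.elim (x - y) w ⬝ᵥ lipSDPMatrix α β W0 W1 lam (L ^ 2) *ᵥ Sum.elim (x - y) w
      ≤ 0 := hLMI _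
  rw [sumElim_dotProduct_lipSDPMatrix_mulVec] at hform
  rw [add_sub_add_right_eq_sub, ← mulVec_sub]
  change _root_.enorm (W1 *ᵥ w) ≤ L * _root_.enorm (x - y)
  exact enorm_le_mul_of_dotProduct_le hL.le (by linarith)

theorem lipsdp_single_layer (n0 n1 n2 : ℕ) (φ : ℝ → ℝ) (α β : ℝ)
    (hα : 0 ≤ α) (hαβ : α < β)
    (hslope : ∀ s t : ℝ, s ≠ t →
      α ≤ (φ s - φ t) / (s - t) ∧ (φ s - φ t) / (s - t) ≤ β)
    (W0 : Matrix (Fin n1) (Fin n0) ℝ) (W1 : Matrix (Fin n2) (Fin n1) ℝ)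
    (b0 : Fin n1 → ℝ) (b1 : Fin n2 → ℝ)
    (L : ℝ) (hL : 0 < L) (lam : Fin n1 → ℝ) (hlam : ∀ i, 0 ≤ lam i)
    (hLMI : ∀ z : Fin n0 ⊕ Fin n1 → ℝ,
      z ⬝ᵥ (Matrix.fromBlocks
        ((-2 * α * β) • (W0ᵀ * Matrix.diagonal lam * W0)
          - L ^ 2 • (1 : Matrix (Fin n0) (Fin n0) ℝ))
        ((α + β) • (W0ᵀ * Matrix.diagonal lam))
        ((α + β) • (Matrix.diagonal lam * W0))
        ((-2 : ℝ) • Matrix.diagonal lam + W1ᵀ * W1)).mulVec z ≤ 0) :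
    ∀ x y : Fin n0 → ℝ,
      _root_.enorm ((W1.mulVec (fun j => φ ((W0.mulVec x + b0) j)) + b1)
           - (W1.mulVec (fun j => φ ((W0.mulVec y + b0) j)) + b1))
        ≤ L * _root_.enorm (x - y) :=
  lipsdp_single_layer_general n0 n1 n2 φ α β hslope W0 W1 b0 b1 L hL lam hlam hLMI
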